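/- Let L be a Lie algebra over a field K and S a linear subspace of L such that every element of L is locally S-nilpotent. Then I = ⋂_{N≥0} ad(S)^N(L) is a Lie ideal of L. -/
import Mathlib


variable (K L : Type*) [Field K] [LieRing L] [LieAlgebra K L]

/-- `adSpan K L S V` is the span of all brackets `⁅s, v⁆` with `s ∈ S`, `v ∈ V`. -/
def adSpan (S V : Submodule K L) : Submodule K L :=
  Submodule.span K {z : L | ∃ s ∈ S, ∃ v ∈ V, z = ⁅s, v⁆}

/-- `adPow K L S n V = ad(S)ⁿ(V)`, the span of `n`-fold iterated brackets
`⁅sₙ, ⁅…, ⁅s₁, v⁆…⁆⁆` with `sᵢ ∈ S`, `v ∈ V`. -/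
def adPow (S : Submodule K L) : ℕ → Submodule K L → Submodule K L
  | 0, V => V
  | (n + 1), V => adSpan K L S (adPow S n V)

lemma lie_mem_adSpan {S V : Submodule K L} {s v : L} (hs : s ∈ S) (hv : v ∈ V) :
    ⁅s, v⁆ ∈ adSpan K L S V :=
  Submodule.subset_span ⟨s, hs, v, hv, rfl⟩

lemma adSpan_mono {S V W : Submodule K L} (h : V ≤ W) :
    adSpan K L S V ≤ adSpan K L S W :=
  Submodule.span_mono (fun z ⟨s, hs, v, hv, hz⟩ => ⟨s, hs, v, h hv, hz⟩)

lemma adPow_mono (S : Submodule K L) (n : ℕ) {V W : Submodule K L} (h : V ≤ W) :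
    adPow K L S n V ≤ adPow K L S n W := by
  induction n with
  | zero => exact h
  | succ n ih => exact adSpan_mono K L ih

lemma adPow_add (S : Submodule K L) (a b : ℕ) (V : Submodule K L) :
    adPow K L S (a + b) V = adPow K L S a (adPow K L S b V) := by
  induction a with
  | zero => simp [adPow]
  | succ a ih =>
    have h1 : adPow K L S (a + 1 + b) V = adSpan K L S (adPow K L S (a + b) V) := by
      rw [show a + 1 + b = (a + b) + 1 by omega]
      rfl
    rw [h1, ih]; rfl

lemma adPow_top_antitone (S : Submodule K L) {m n : ℕ} (h : m ≤ n) :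
    adPow K L S n ⊤ ≤ adPow K L S m ⊤ := by
  induction n with
  | zero => simpa [Nat.le_zero.mp h]
  | succ n ih =>
    rcases Nat.lt_or_ge m (n+1) with h' | h'
    · refine le_trans ?_ (ih (by omega))
      rw [adPow_add K L S n 1]
      exact adPow_mono K L S n le_top
    · rw [Nat.le_antisymm h h']

lemma adPow_key (S : Submodule K L) : ∀ (N k : ℕ) (x : L),
    adPow K L S (k + 1) (Submodule.span K {x}) = ⊥ →
    ∀ y ∈ adPow K L S N ⊤, ⁅x, y⁆ ∈ adPow K L S (N - k) ⊤ := by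
  intro N
  induction N with
  | zero => intro k x _ y _; simp [adPow]
  | succ N ih =>
    intro k x hx y hy
    have hspan : adPow K L S (N + 1) ⊤ = adSpan K L S (adPow K L S N ⊤) := rfl
    rw [hspan] at hy
    refine Submodule.span_induction ?_ (by simp) (fun a b _ _ ha hb => by
        rw [lie_add]; exact add_mem ha hb)
      (fun c a _ ha => by rw [lie_smul]; exact Submodule.smul_mem _ c ha) hy
    rintro z ⟨s, hs, v, hv, rfl⟩
    have leib : ⁅x, ⁅s, v⁆⁆ = ⁅⁅x, s⁆, v⁆ + ⁅s, ⁅x, v⁆⁆ := leibniz_lie x s v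
    rw [leib]
    cases k with
    | zero =>
      have hxs : ⁅s, x⁆ = 0 := by
        have : ⁅s, x⁆ ∈ adPow K L S 1 (Submodule.span K {x}) :=
          lie_mem_adSpan K L hs (Submodule.mem_span_singleton_self x)
        rw [hx] at this; simpa using this
      have hxs' : ⁅x, s⁆ = 0 := by rw [← lie_skew x s, hxs, neg_zero]
      rw [hxs', zero_lie, zero_add, Nat.sub_zero]
      exact lie_mem_adSpan K L hs (by simpa using ih 0 x hx v hv)
    | succ k' =>
      apply add_mem
      · -- first term: x' = ⁅x, s⁆
        have hsub : Submodule.span K ({⁅x, s⁆} : Set L) ≤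
            adPow K L S 1 (Submodule.span K {x}) := by
          rw [Submodule.span_le, Set.singleton_subset_iff]
          have : ⁅s, x⁆ ∈ adPow K L S 1 (Submodule.span K {x}) :=
            lie_mem_adSpan K L hs (Submodule.mem_span_singleton_self x)
          have := neg_mem this
          rwa [lie_skew x s] at this
        have hx' : adPow K L S (k' + 1) (Submodule.span K {⁅x, s⁆}) = ⊥ := by
          refine le_bot_iff.mp ?_
          calc adPow K L S (k' + 1) (Submodule.span K {⁅x, s⁆})
              ≤ adPow K L S (k' + 1) (adPow K L S 1 (Submodule.span K {x})) :=
                adPow_mono K L S _ hsub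
            _ = adPow K L S (k' + 2) (Submodule.span K {x}) := by
                rw [← adPow_add]
            _ = ⊥ := hx
        have := ih k' ⁅x, s⁆ hx' v hv
        exact adPow_top_antitone K L S (by omega) this
      · -- second term
        have h2 := ih (k' + 1) x hx v hv
        have : ⁅s, ⁅x, v⁆⁆ ∈ adPow K L S ((N - (k' + 1)) + 1) ⊤ := by
          rw [Nat.add_comm _ 1, adPow_add]
          exact lie_mem_adSpan K L hs h2
        exact adPow_top_antitone K L S (by omega) this

/-- Let `S` be a linear subspace of a Lie algebra `L` such that every element of
`L` is locally `S`-nilpotent.  Then `I = ⋂_{N ≥ 0} ad(S)^N(L)` is a Lie ideal of `L`. -/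
theorem iInf_adPow_is_lieIdeal (S : Submodule K L)
    (hnil : ∀ x : L, ∃ n : ℕ, adPow K L S (n + 1) (Submodule.span K {x}) = ⊥) :
    ∃ I : LieIdeal K L, (I : Submodule K L) = ⨅ n : ℕ, adPow K L S n ⊤ := by
  refine ⟨{ toSubmodule := ⨅ n : ℕ, adPow K L S n ⊤, lie_mem := ?_ }, rfl⟩
  intro x y hy
  obtain ⟨n, hn⟩ := hnil x
  have hy' : y ∈ ⨅ n : ℕ, adPow K L S n ⊤ := hy
  show ⁅x, y⁆ ∈ ⨅ n : ℕ, adPow K L S n ⊤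
  rw [Submodule.mem_iInf] at hy' ⊢
  intro m
  have hym : y ∈ adPow K L S (m + n) ⊤ := hy' (m + n)
  have := adPow_key K L S (m + n) n x hn y hym
  simpa using this
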